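/- Let T be a finite lattice and n a natural number. Surjective join-morphisms π : T → Fin (n+1) correspond bijectively to chains {b₀ < b₁ < ⋯ < bₙ} in T with bₙ = ⊤, via π ↦ (b₀,…,bₙ) where bᵢ = sup { t ∈ T | π(t) = i }; conversely, given such a chain, π(t) is the least i with t ≤ bᵢ. -/

import Mathlib

attribute [local instance] Classical.propDecidable

set_option linter.unusedSectionVars false

open Finset Function

namespace SJMAux

variable {T : Type*} [Lattice T] [Fintype T] [BoundedOrder T] {n : ℕ}

noncomputable def bfun (π : T → Fin (n + 1)) (i : Fin (n + 1)) : T :=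
  (Finset.univ.filter fun t : T => π t = i).sup id

variable {π : T → Fin (n + 1)}

lemma pi_mono (hj : ∀ X : Finset T, π (X.sup id) = X.sup π) : Monotone π := by
  intro s t hst
  have h := hj {s, t}
  have h1 : ({s, t} : Finset T).sup id = t := by
    simp [sup_eq_right.2 hst]
  rw [h1] at h
  have h2 : π s ≤ ({s, t} : Finset T).sup π := Finset.le_sup (by simp)
  rwa [← h] at h2

lemma le_bfun (t : T) : t ≤ bfun π (π t) :=
  Finset.le_sup (f := id) (by simp)

lemma pi_bfun (hj : ∀ X : Finset T, π (X.sup id) = X.sup π)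
    (hs : Surjective π) (i : Fin (n + 1)) : π (bfun π i) = i := by
  obtain ⟨t0, ht0⟩ := hs i
  rw [bfun, hj]
  apply le_antisymm
  · exact Finset.sup_le fun t ht => le_of_eq (by simpa using ht)
  · calc i = π t0 := ht0.symm
    _ ≤ _ := Finset.le_sup (f := π) (by simp [ht0])

lemma bfun_eq (hj : ∀ X : Finset T, π (X.sup id) = X.sup π) (hs : Surjective π)
    (i : Fin (n + 1)) :
    bfun π i = (Finset.univ.filter fun t : T => π t ≤ i).sup id := by
  have hpc : π ((Finset.univ.filter fun t : T => π t ≤ i).sup id) = i := by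
    rw [hj]
    apply le_antisymm
    · exact Finset.sup_le fun t ht => by simpa using ht
    · calc i = π (bfun π i) := (pi_bfun hj hs i).symm
      _ ≤ _ := Finset.le_sup (f := π) (by simp [pi_bfun hj hs i])
  apply le_antisymm
  · exact Finset.sup_mono (Finset.monotone_filter_right _ (fun t _ ht => le_of_eq ht))
  · exact Finset.le_sup (f := id) (Finset.mem_filter.2 ⟨Finset.mem_univ _, hpc⟩)

lemma bfun_mono (hj : ∀ X : Finset T, π (X.sup id) = X.sup π) (hs : Surjective π) :
    Monotone (bfun π) := by
  intro i j hij
  rw [bfun_eq hj hs, bfun_eq hj hs]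
  exact Finset.sup_mono (Finset.monotone_filter_right _ (fun t _ ht => ht.trans hij))

lemma bfun_strictMono (hj : ∀ X : Finset T, π (X.sup id) = X.sup π) (hs : Surjective π) :
    StrictMono (bfun π) :=
  (bfun_mono hj hs).strictMono_of_injective fun i j h => by
    have := pi_bfun hj hs i; rw [h, pi_bfun hj hs j] at this; exact this.symm

lemma pi_le_iff (hj : ∀ X : Finset T, π (X.sup id) = X.sup π) (hs : Surjective π)
    {t : T} {i : Fin (n + 1)} : π t ≤ i ↔ t ≤ bfun π i := by
  constructor
  · exact fun h => (le_bfun t).trans (bfun_mono hj hs h)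
  · intro h
    have := pi_mono hj h
    rwa [pi_bfun hj hs i] at this

lemma inf_id_eq_min' {s : Finset (Fin (n + 1))} (hs : s.Nonempty) :
    s.inf id = s.min' hs := by
  rw [Finset.min'_eq_inf', Finset.inf'_eq_inf]

lemma pi_eq_inf (hj : ∀ X : Finset T, π (X.sup id) = X.sup π) (hs : Surjective π) (t : T) :
    π t = (Finset.univ.filter fun i : Fin (n + 1) => t ≤ bfun π i).inf id := by
  have hmem : π t ∈ Finset.univ.filter fun i : Fin (n + 1) => t ≤ bfun π i := by
    simp [le_bfun t]
  have hne : (Finset.univ.filter fun i : Fin (n + 1) => t ≤ bfun π i).Nonempty := ⟨_, hmem⟩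
  rw [inf_id_eq_min' hne]
  refine le_antisymm ?_ (Finset.min'_le _ _ hmem)
  have hm := Finset.min'_mem _ hne
  rw [Finset.mem_filter] at hm
  exact (pi_le_iff hj hs).2 hm.2

section Inv

variable (B : Finset T)

noncomputable def chainLO (hchain : IsChain (· ≤ ·) (B : Set T)) :
    LinearOrder {x : T // x ∈ B} :=
  { Subtype.partialOrder _ with
    le_total := fun a b => hchain.total (Finset.mem_coe.2 a.2) (Finset.mem_coe.2 b.2)
    toDecidableLE := fun _ _ => Classical.propDecidable _ }

variable (hcard : B.card = n + 1) (hchain : IsChain (· ≤ ·) (B : Set T))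

noncomputable def benum : Fin (n + 1) → T :=
  letI := chainLO B hchain
  fun i => (B.attach.orderEmbOfFin (by rw [Finset.card_attach, hcard]) i : T)

lemma benum_spec :
    StrictMono (benum B hcard hchain) ∧ (∀ i, benum B hcard hchain i ∈ B) ∧
      ∀ x ∈ B, ∃ i, benum B hcard hchain i = x := by
  letI := chainLO B hchain
  set em := B.attach.orderEmbOfFin
    (show B.attach.card = n + 1 by rw [Finset.card_attach, hcard]) with hem
  have hb : ∀ i, benum B hcard hchain i = ((em i : {x : T // x ∈ B}) : T) := fun i => rfl
  have hmono : Monotone (benum B hcard hchain) := by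
    intro i j hij
    rw [hb, hb]
    exact em.monotone hij
  have hinj : Injective (benum B hcard hchain) := by
    intro i j hij
    rw [hb, hb] at hij
    exact em.injective (Subtype.coe_injective hij)
  refine ⟨hmono.strictMono_of_injective hinj, fun i => (em i : {x : T // x ∈ B}).2, ?_⟩
  intro x hx
  have : (⟨x, hx⟩ : {x : T // x ∈ B}) ∈ Set.range em := by
    rw [Finset.range_orderEmbOfFin]
    exact Finset.mem_coe.2 (Finset.mem_attach _ _)
  obtain ⟨i, hi⟩ := this
  exact ⟨i, by rw [hb, hi]⟩



variable (htop : ⊤ ∈ B)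
include htop

lemma benum_last : benum B hcard hchain (Fin.last n) = ⊤ := by
  obtain ⟨i, hi⟩ := (benum_spec B hcard hchain).2.2 ⊤ htop
  exact top_unique (hi ▸ (benum_spec B hcard hchain).1.monotone (Fin.le_last i))

lemma image_benum : Finset.image (benum B hcard hchain) Finset.univ = B := by
  apply Finset.ext
  intro x
  simp only [Finset.mem_image, Finset.mem_univ, true_and]
  constructor
  · rintro ⟨i, rfl⟩; exact (benum_spec B hcard hchain).2.1 i
  · intro hx; exact (benum_spec B hcard hchain).2.2 x hx

noncomputable def piB : T → Fin (n + 1) := fun t =>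
  (Finset.univ.filter fun i : Fin (n + 1) => t ≤ benum B hcard hchain i).inf id

lemma piB_mem (t : T) :
    piB B hcard hchain t ∈
      Finset.univ.filter fun i : Fin (n + 1) => t ≤ benum B hcard hchain i := by
  have hne : (Finset.univ.filter fun i : Fin (n + 1) => t ≤ benum B hcard hchain i).Nonempty :=
    ⟨Fin.last n, by simp [benum_last B hcard hchain htop]⟩
  rw [piB, inf_id_eq_min' hne]
  exact Finset.min'_mem _ hne

lemma le_benum_piB (t : T) : t ≤ benum B hcard hchain (piB B hcard hchain t) := by
  have := piB_mem B hcard hchain htop t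
  rw [Finset.mem_filter] at this
  exact this.2

lemma piB_le_iff {t : T} {i : Fin (n + 1)} :
    piB B hcard hchain t ≤ i ↔ t ≤ benum B hcard hchain i := by
  constructor
  · intro h
    exact (le_benum_piB B hcard hchain htop t).trans
      ((benum_spec B hcard hchain).1.monotone h)
  · intro h
    exact Finset.inf_le (Finset.mem_filter.2 ⟨Finset.mem_univ _, h⟩)

lemma piB_join (X : Finset T) :
    piB B hcard hchain (X.sup id) = X.sup (piB B hcard hchain) := by
  apply le_antisymm
  · rw [piB_le_iff B hcard hchain htop]
    exact Finset.sup_le fun x hx =>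
      (le_benum_piB B hcard hchain htop x).trans
        ((benum_spec B hcard hchain).1.monotone (Finset.le_sup (f := piB B hcard hchain) hx))
  · exact Finset.sup_le fun x hx =>
      (piB_le_iff B hcard hchain htop).2
        ((Finset.le_sup (f := id) hx).trans (le_benum_piB B hcard hchain htop _))

lemma piB_benum (i : Fin (n + 1)) : piB B hcard hchain (benum B hcard hchain i) = i := by
  apply le_antisymm
  · exact (piB_le_iff B hcard hchain htop).2 le_rfl
  · exact ((benum_spec B hcard hchain).1.le_iff_le).1
      (le_benum_piB B hcard hchain htop _)

lemma piB_surj : Surjective (piB B hcard hchain) :=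
  fun i => ⟨benum B hcard hchain i, piB_benum B hcard hchain htop i⟩

lemma bfun_piB (i : Fin (n + 1)) :
    bfun (piB B hcard hchain) i = benum B hcard hchain i := by
  apply le_antisymm
  · refine Finset.sup_le fun t ht => ?_
    rw [Finset.mem_filter] at ht
    exact (piB_le_iff B hcard hchain htop).1 (le_of_eq ht.2)
  · exact Finset.le_sup (f := id)
      (Finset.mem_filter.2 ⟨Finset.mem_univ _, piB_benum B hcard hchain htop i⟩)

end Inv

noncomputable def fwd (n : ℕ)
    (π : {π : T → Fin (n + 1) //
      (∀ X : Finset T, π (X.sup id) = X.sup π) ∧ Surjective π}) :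
    {B : Finset T // B.card = n + 1 ∧ IsChain (· ≤ ·) (B : Set T) ∧ ⊤ ∈ B} :=
  ⟨Finset.image (bfun π.1) Finset.univ,
    by
      rw [Finset.card_image_of_injective _ (bfun_strictMono π.2.1 π.2.2).injective]
      simp,
    by
      have h : (Finset.image (bfun π.1) Finset.univ : Set T) = Set.range (bfun π.1) := by
        rw [Finset.coe_image, Finset.coe_univ, Set.image_univ]
      rw [h]
      exact (bfun_mono π.2.1 π.2.2).isChain_range,
    Finset.mem_image.2 ⟨π.1 ⊤, Finset.mem_univ _, top_unique (le_bfun ⊤)⟩⟩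

lemma fwd_bij (n : ℕ) : Function.Bijective (fwd (T := T) n) := by
  constructor
  · rintro ⟨π, hj, hs⟩ ⟨π', hj', hs'⟩ h
    have him : Finset.image (bfun π) Finset.univ = Finset.image (bfun π') Finset.univ :=
      congrArg Subtype.val h
    have hrange : Set.range (bfun π) = Set.range (bfun π') := by
      rw [← Set.image_univ, ← Set.image_univ, ← Finset.coe_univ, ← Finset.coe_image,
        ← Finset.coe_image, him]
    have hbf : bfun π = bfun π' := by
      haveI : WellFoundedLT (Fin (n+1)) := inferInstance
      exact (StrictMono.range_inj (β := Fin (n+1)) (bfun_strictMono hj hs) (bfun_strictMono hj' hs')).1 hrange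
    apply Subtype.ext
    funext t
    show π t = π' t
    rw [pi_eq_inf hj hs t, pi_eq_inf hj' hs' t, hbf]
  · rintro ⟨B, hcard, hchain, htop⟩
    refine ⟨⟨piB B hcard hchain,
      piB_join B hcard hchain htop, piB_surj B hcard hchain htop⟩, ?_⟩
    apply Subtype.ext
    show Finset.image (bfun (piB B hcard hchain)) Finset.univ = B
    rw [show bfun (piB B hcard hchain) = benum B hcard hchain from
      funext (bfun_piB B hcard hchain htop)]
    exact image_benum B hcard hchain htop

end SJMAux

/-- Surjective join-morphisms `π : T → Fin (n+1)` correspond bijectively to chains of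
cardinality `n+1` in `T` containing `⊤`, via `π ↦ {b₀,…,bₙ}` where
`bᵢ = sup {t | π t = i}`; conversely `π t` is the least `i` with `t ≤ bᵢ`. -/
theorem surjective_join_morphisms_equiv_chains_to_top
    {T : Type*} [Lattice T] [Fintype T] [BoundedOrder T] (n : ℕ) :
    ∃ e : {π : T → Fin (n + 1) //
            (∀ X : Finset T, π (X.sup id) = X.sup π) ∧ Function.Surjective π} ≃
          {B : Finset T // B.card = n + 1 ∧ IsChain (· ≤ ·) (B : Set T) ∧ ⊤ ∈ B},
      ∀ π, ((e π : Finset T))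
            = Finset.image
                (fun i : Fin (n + 1) =>
                  (Finset.univ.filter fun t : T => (π : T → Fin (n + 1)) t = i).sup id)
                Finset.univ
        ∧ ∀ t : T,
            (π : T → Fin (n + 1)) t
              = (Finset.univ.filter fun i : Fin (n + 1) =>
                  t ≤ (Finset.univ.filter fun s : T =>
                        (π : T → Fin (n + 1)) s = i).sup id).inf id := by
  refine ⟨Equiv.ofBijective _ (SJMAux.fwd_bij n), fun π => ⟨rfl, fun t => ?_⟩⟩
  exact SJMAux.pi_eq_inf π.2.1 π.2.2 t
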